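/- Let n ≥ 3. Then g_{σ_n} commutes with every element of the image of F_n ∘ F_{n−1} : TLhat_{n−1}(q) → TLhat_{n+1}(q); that is, for every x ∈ TLhat_{n−1}(q), g_{σ_n}·F_n(F_{n−1}(x)) = F_n(F_{n−1}(x))·g_{σ_n} in TLhat_{n+1}(q). -/
import Mathlib


namespace AffineTL

open FreeAlgebra

/-- Cyclic successor on `Fin m`. -/
def csucc {m : ℕ} (i : Fin m) : Fin m := ⟨(i.val + 1) % m, Nat.mod_lt _ i.pos⟩

/-- The defining relations of the affine Temperley–Lieb algebra `TLhat_m(q)` with `m`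
generators (indexed so that `g_{σ_i}` has index `i - 1` and `g_{a_m}` has index `m - 1`).
For `m = 1` the unique generator is set to `0`, so that `TLhat_1(q) ≅ K`. -/
inductive ATLRel {K : Type*} [CommRing K] (q : K) (m : ℕ) :
    FreeAlgebra K (Fin m) → FreeAlgebra K (Fin m) → Prop
  | degen (h : m ≤ 1) (i : Fin m) : ATLRel q m (ι K i) 0
  | quad (h : 2 ≤ m) (i : Fin m) :
      ATLRel q m (ι K i * ι K i) ((q - 1) • ι K i + algebraMap K _ q)
  | comm (h : 3 ≤ m) (i j : Fin m) (h1 : i ≠ j) (h2 : j ≠ csucc i) (h3 : i ≠ csucc j) :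
      ATLRel q m (ι K i * ι K j) (ι K j * ι K i)
  | braid (h : 3 ≤ m) (i : Fin m) :
      ATLRel q m (ι K i * ι K (csucc i) * ι K i) (ι K (csucc i) * ι K i * ι K (csucc i))
  | vrel (h : 3 ≤ m) (i : Fin m) :
      ATLRel q m (ι K i * ι K (csucc i) * ι K i + ι K i * ι K (csucc i) + ι K (csucc i) * ι K i
        + ι K i + ι K (csucc i) + 1) 0

/-- The affine Temperley–Lieb algebra `TLhat_m(q)` of type `Ã`. -/
abbrev ATL (K : Type*) [CommRing K] (q : K) (m : ℕ) : Type _ := RingQuot (ATLRel q m)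

/-- The generators of `TLhat_m(q)`. -/
noncomputable def g {K : Type*} [CommRing K] (q : K) (m : ℕ) (i : Fin m) : ATL K q m :=
  RingQuot.mkAlgHom K (ATLRel q m) (ι K i)

/-- The defining relations of the type `A` Temperley–Lieb algebra `TL_n(q)` with `n`
generators (`g_{σ_i}` has index `i - 1`). -/
inductive TLARel {K : Type*} [CommRing K] (q : K) (n : ℕ) :
    FreeAlgebra K (Fin n) → FreeAlgebra K (Fin n) → Prop
  | quad (i : Fin n) :
      TLARel q n (ι K i * ι K i) ((q - 1) • ι K i + algebraMap K _ q)
  | comm (i j : Fin n) (h : i.val + 2 ≤ j.val ∨ j.val + 2 ≤ i.val) :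
      TLARel q n (ι K i * ι K j) (ι K j * ι K i)
  | braid (i j : Fin n) (h : j.val = i.val + 1) :
      TLARel q n (ι K i * ι K j * ι K i) (ι K j * ι K i * ι K j)
  | vrel (i j : Fin n) (h : j.val = i.val + 1) :
      TLARel q n (ι K i * ι K j * ι K i + ι K i * ι K j + ι K j * ι K i
        + ι K i + ι K j + 1) 0

/-- The type `A` Temperley–Lieb algebra `TL_n(q)`. -/
abbrev TLA (K : Type*) [CommRing K] (q : K) (n : ℕ) : Type _ := RingQuot (TLARel q n)

/-- The generators of `TL_n(q)`. -/
noncomputable def gA {K : Type*} [CommRing K] (q : K) (n : ℕ) (i : Fin n) : TLA K q n :=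
  RingQuot.mkAlgHom K (TLARel q n) (ι K i)

/-- The formal inverse `q⁻¹·(x − (q−1))` of an element satisfying `x² = (q−1)x + q`. -/
noncomputable def qinv {K : Type*} [CommRing K] (q : K) {A : Type*} [Ring A] [Algebra K A]
    (x : A) : A :=
  Ring.inverse q • (x - algebraMap K A (q - 1))

/-- A trace on a `K`-algebra: a `K`-linear form vanishing on commutators. -/
def IsTrace {K : Type*} [CommRing K] {A : Type*} [Ring A] [Algebra K A]
    (τ : A →ₗ[K] K) : Prop :=
  ∀ x y : A, τ (x * y) = τ (y * x)

/-- The element `G = g_{σ_n}⋯g_{σ_1}·g_{a_{n+1}}` of `TLhat_{n+1}(q)`. -/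
noncomputable def bigG {K : Type*} [CommRing K] (q : K) (n : ℕ) : ATL K q (n + 1) :=
  (List.ofFn fun j : Fin n => g q (n + 1) ⟨n - 1 - j.val, by omega⟩).prod *
    g q (n + 1) (Fin.last n)

/-- The inverse `G⁻¹ = g_{a_{n+1}}⁻¹·g_{σ_1}⁻¹⋯g_{σ_n}⁻¹` of `bigG`. -/
noncomputable def bigGinv {K : Type*} [CommRing K] (q : K) (n : ℕ) : ATL K q (n + 1) :=
  qinv q (g q (n + 1) (Fin.last n)) *
    (List.ofFn fun j : Fin n => qinv q (g q (n + 1) j.castSucc)).prod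

end AffineTL

namespace AffineTL

/-- `F` is the canonical homomorphism `F_m : TLhat_m(q) → TLhat_{m+1}(q)`:
`t_{σ_i} ↦ g_{σ_i}` for `1 ≤ i ≤ m−1` and `t_{a_m} ↦ g_{σ_m}·g_{a_{m+1}}·g_{σ_m}⁻¹`. -/
def isF {K : Type*} [CommRing K] (q : K) (m : ℕ) (hm : 2 ≤ m)
    (F : ATL K q m →ₐ[K] ATL K q (m + 1)) : Prop :=
  (∀ i : ℕ, ∀ hi : i < m - 1,
      F (g q m ⟨i, by omega⟩) = g q (m + 1) ⟨i, by omega⟩) ∧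
  F (g q m ⟨m - 1, by omega⟩) =
    g q (m + 1) ⟨m - 1, by omega⟩ * g q (m + 1) ⟨m, by omega⟩ *
      qinv q (g q (m + 1) ⟨m - 1, by omega⟩)

end AffineTL


namespace AffineTL

section Aux

variable {K : Type*} [CommRing K] (q : K)

theorem key_group {G : Type*} [Group G] (a b c : G)
    (hbraid : a * b * a = b * a * b) (hcomm : a * c = c * a) :
    b * (a * (b * c * ↑b⁻¹) * ↑a⁻¹) = a * (b * c * ↑b⁻¹) * ↑a⁻¹ * b := by
  have h2 : b⁻¹ * (a * b) = a * (b * a⁻¹) := by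
    have h := congrArg (fun x => b⁻¹ * x * a⁻¹) hbraid
    simpa [mul_assoc] using h
  have L : a * b⁻¹ * a⁻¹ = b⁻¹ * a⁻¹ * b := by
    have := congrArg (·⁻¹) h2
    simp [mul_assoc] at this
    simp [mul_assoc, this]
  calc b * (a * (b * c * b⁻¹) * a⁻¹)
      = (b * a * b) * c * (b⁻¹ * a⁻¹) := by group
    _ = (a * b * a) * c * (b⁻¹ * a⁻¹) := by rw [hbraid.symm]
    _ = a * b * ((a * c) * (b⁻¹ * a⁻¹)) := by group
    _ = a * b * ((c * a) * (b⁻¹ * a⁻¹)) := by rw [hcomm]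
    _ = a * b * c * (a * b⁻¹ * a⁻¹) := by group
    _ = a * b * c * (b⁻¹ * a⁻¹ * b) := by rw [L]
    _ = a * (b * c * b⁻¹) * a⁻¹ * b := by group

theorem qinv_mul {A : Type*} [Ring A] [Algebra K A] (hq : IsUnit q) (x : A)
    (hx : x * x = (q - 1) • x + algebraMap K A q) :
    x * qinv q x = 1 ∧ qinv q x * x = 1 := by
  have hinv : Ring.inverse q * q = 1 := Ring.inverse_mul_cancel _ hq
  constructor
  · rw [qinv, mul_smul_comm, mul_sub, hx, Algebra.algebraMap_eq_smul_one,
      Algebra.algebraMap_eq_smul_one, mul_smul_comm, mul_one]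
    rw [add_sub_cancel_left, smul_smul, hinv, one_smul]
  · rw [qinv, smul_mul_assoc, sub_mul, hx, Algebra.algebraMap_eq_smul_one,
      Algebra.algebraMap_eq_smul_one, smul_mul_assoc, one_mul]
    rw [add_sub_cancel_left, smul_smul, hinv, one_smul]

theorem g_quad {M : ℕ} (hM : 2 ≤ M) (i : Fin M) :
    g q M i * g q M i = (q - 1) • g q M i + algebraMap K (ATL K q M) q := by
  have h := RingQuot.mkAlgHom_rel K (ATLRel.quad (q := q) hM i)
  simpa [g, map_add, map_mul, map_smul, AlgHom.commutes] using h

theorem g_braid {M : ℕ} (hM : 3 ≤ M) (i : Fin M) :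
    g q M i * g q M (csucc i) * g q M i = g q M (csucc i) * g q M i * g q M (csucc i) := by
  have h := RingQuot.mkAlgHom_rel K (ATLRel.braid (q := q) hM i)
  simpa [g, map_mul] using h

theorem g_comm {M : ℕ} (hM : 3 ≤ M) (i j : Fin M) (h1 : i ≠ j) (h2 : j ≠ csucc i)
    (h3 : i ≠ csucc j) :
    g q M i * g q M j = g q M j * g q M i := by
  have h := RingQuot.mkAlgHom_rel K (ATLRel.comm (q := q) hM i j h1 h2 h3)
  simpa [g, map_mul] using h

theorem map_qinv {A B : Type*} [Ring A] [Algebra K A] [Ring B] [Algebra K B]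
    (f : A →ₐ[K] B) (x : A) : f (qinv q x) = qinv q (f x) := by
  simp [qinv, map_sub, AlgHom.commutes]

end Aux

end AffineTL

set_option maxHeartbeats 1600000 in
open AffineTL in
/-- for `n ≥ 3` (written `n = m + 1` with `m ≥ 2`), the generator `g_{σ_n}` of
`TLhat_{n+1}(q)` commutes with every element of the image of
`F_n ∘ F_{n−1} : TLhat_{n−1}(q) → TLhat_{n+1}(q)`. -/
theorem statement17 {K : Type*} [CommRing K] [IsDomain K] [CharZero K]
    (q sq : K) (hsq : sq * sq = q) (hq : IsUnit q) (hq1 : IsUnit (q + 1))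
    (m : ℕ) (hm : 2 ≤ m)
    -- `F_{n−1} : TLhat_{n−1}(q) → TLhat_n(q)`
    (F' : ATL K q m →ₐ[K] ATL K q (m + 1)) (hF' : isF q m hm F')
    -- `F_n : TLhat_n(q) → TLhat_{n+1}(q)`
    (F : ATL K q (m + 1) →ₐ[K] ATL K q (m + 2)) (hF : isF q (m + 1) (by omega) F) :
    ∀ x : ATL K q m,
      g q (m + 2) ⟨m, by omega⟩ * F (F' x) = F (F' x) * g q (m + 2) ⟨m, by omega⟩ := by
  have hc3 : (3 : ℕ) ≤ m + 2 := by omega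
  suffices h : ∀ a : FreeAlgebra K (Fin m),
      g q (m + 2) ⟨m, by omega⟩ * F (F' (RingQuot.mkAlgHom K (ATLRel q m) a)) =
      F (F' (RingQuot.mkAlgHom K (ATLRel q m) a)) * g q (m + 2) ⟨m, by omega⟩ by
    intro x
    obtain ⟨a, rfl⟩ := RingQuot.mkAlgHom_surjective K (ATLRel q m) x
    exact h a
  intro a
  induction a using FreeAlgebra.induction with
  | grade0 r => simp [AlgHom.commutes, Algebra.commutes]
  | add x y hx hy => simp only [map_add, mul_add, add_mul, hx, hy]
  | mul x y hx hy =>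
      simp only [map_mul]
      rw [← mul_assoc, hx, mul_assoc, hy, ← mul_assoc]
  | grade1 i =>
      rcases i with ⟨iv, hiv⟩
      have hmk : RingQuot.mkAlgHom K (ATLRel q m) (FreeAlgebra.ι K (⟨iv, hiv⟩ : Fin m))
          = g q m ⟨iv, hiv⟩ := rfl
      rw [hmk]
      rcases lt_or_ge iv (m - 1) with hlt | hge
      · -- σ-generator case
        have e1 : F' (g q m ⟨iv, hiv⟩) = g q (m + 1) ⟨iv, by omega⟩ := hF'.1 iv hlt
        have e2 : F (g q (m + 1) ⟨iv, by omega⟩) = g q (m + 2) ⟨iv, by omega⟩ :=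
          hF.1 iv (by omega)
        rw [e1, e2]
        refine g_comm q hc3 ⟨m, by omega⟩ ⟨iv, by omega⟩ ?_ ?_ ?_
        · simp only [ne_eq, Fin.mk.injEq]; omega
        · simp only [csucc, ne_eq, Fin.mk.injEq,
            Nat.mod_eq_of_lt (show m + 1 < m + 2 by omega)]
          omega
        · simp only [csucc, ne_eq, Fin.mk.injEq,
            Nat.mod_eq_of_lt (show iv + 1 < m + 2 by omega)]
          omega
      · -- a-generator case: iv = m - 1
        have hieq : (⟨iv, hiv⟩ : Fin m) = ⟨m - 1, by omega⟩ := by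
          ext; simp; omega
        rw [hieq, hF'.2, map_mul, map_mul, map_qinv]
        have eA : F (g q (m + 1) ⟨m - 1, by omega⟩) = g q (m + 2) ⟨m - 1, by omega⟩ :=
          hF.1 (m - 1) (by omega)
        have eB : F (g q (m + 1) ⟨m, by omega⟩) =
            g q (m + 2) ⟨m, by omega⟩ * g q (m + 2) ⟨m + 1, by omega⟩ *
              qinv q (g q (m + 2) ⟨m, by omega⟩) := hF.2
        rw [eA, eB]
        set A : ATL K q (m + 2) := g q (m + 2) ⟨m - 1, by omega⟩ with hA
        set B : ATL K q (m + 2) := g q (m + 2) ⟨m, by omega⟩ with hB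
        set C : ATL K q (m + 2) := g q (m + 2) ⟨m + 1, by omega⟩ with hC
        have pA := qinv_mul q hq A (g_quad q (by omega) _)
        have pB := qinv_mul q hq B (g_quad q (by omega) _)
        have pC := qinv_mul q hq C (g_quad q (by omega) _)
        set uA : (ATL K q (m + 2))ˣ := ⟨A, qinv q A, pA.1, pA.2⟩ with huA
        set uB : (ATL K q (m + 2))ˣ := ⟨B, qinv q B, pB.1, pB.2⟩ with huB
        set uC : (ATL K q (m + 2))ˣ := ⟨C, qinv q C, pC.1, pC.2⟩ with huC
        have hcs1 : csucc (⟨m - 1, by omega⟩ : Fin (m + 2)) = ⟨m, by omega⟩ := by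
          ext
          simp only [csucc, Nat.mod_eq_of_lt (show m - 1 + 1 < m + 2 by omega)]
          omega
        have hbr : A * B * A = B * A * B := by
          have h := g_braid q hc3 (⟨m - 1, by omega⟩ : Fin (m + 2))
          rwa [hcs1] at h
        have hco : A * C = C * A := by
          refine g_comm q hc3 ⟨m - 1, by omega⟩ ⟨m + 1, by omega⟩ ?_ ?_ ?_
          · simp only [ne_eq, Fin.mk.injEq]; omega
          · rw [hcs1]; simp only [ne_eq, Fin.mk.injEq]; omega
          · simp only [csucc, ne_eq, Fin.mk.injEq,
              Nat.mod_self (m + 2)]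
            omega
        have hbrU : uA * uB * uA = uB * uA * uB := Units.ext (by
          simp only [Units.val_mul]; exact hbr)
        have hcoU : uA * uC = uC * uA := Units.ext (by
          simp only [Units.val_mul]; exact hco)
        have final := key_group uA uB uC hbrU hcoU
        have := congrArg Units.val final
        simp only [Units.val_mul] at this
        exact this
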